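/- arXiv:2510.19688 — 2 statements merged into one kernel-verified Lean document; each statement's English description precedes it below -/
import Mathlib

section
/- Let Y : [s, t] → ℝ be nonnegative and differentiable with Y(t) = t - T* > 0, and suppose Y'(s') ≤ K·Y(s')^μ·(s'-T*)^{-μ} for all s' ∈ [s,t], where 0 < μ < 1, 0 < K < 1, and T* < s < t. Then Y(s)^{1-μ} ≥ (1-K)(t-T*)^{1-μ} + K(s-T*)^{1-μ}; in particular Y(s) ≥ (1-K)^{1/(1-μ)}(t-T*). -/
lemma stmt_8_key (Tstar s t μ K : ℝ) (hμ0 : 0 < μ) (hμ1 : μ < 1)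
    (hK0 : 0 < K) (hK1 : K < 1) (hTs : Tstar < s) (hst : s < t)
    (Y Y' : ℝ → ℝ)
    (hYnn : ∀ u ∈ Set.Icc s t, 0 ≤ Y u)
    (hYd : ∀ u ∈ Set.Icc s t, HasDerivAt Y (Y' u) u)
    (hY' : ∀ u ∈ Set.Icc s t, Y' u ≤ K * (Y u) ^ μ * (u - Tstar) ^ (-μ))
    (hYt : Y t = t - Tstar) (ε : ℝ) (hε : 0 < ε) :
    (1 - K) * (t - Tstar) ^ (1 - μ) + K * (s - Tstar) ^ (1 - μ) ≤ (Y s + ε) ^ (1 - μ) := by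
  set g : ℝ → ℝ := fun u => (Y u + ε) ^ (1 - μ) - K * (u - Tstar) ^ (1 - μ) with hg
  set g' : ℝ → ℝ := fun u =>
    Y' u * (1 - μ) * (Y u + ε) ^ (1 - μ - 1) - K * (1 * (1 - μ) * (u - Tstar) ^ (1 - μ - 1))
  have hne : ∀ u ∈ Set.Icc s t, Y u + ε ≠ 0 := fun u hu => by
    have := hYnn u hu; positivity
  have htpos : ∀ u ∈ Set.Icc s t, (0:ℝ) < u - Tstar := fun u hu => by
    have := hu.1; linarith
  have hgd : ∀ u ∈ Set.Icc s t, HasDerivAt g (g' u) u := by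
    intro u hu
    have h1 : HasDerivAt (fun u => (Y u + ε) ^ (1 - μ))
        (Y' u * (1 - μ) * (Y u + ε) ^ (1 - μ - 1)) u :=
      ((hYd u hu).add_const ε).rpow_const (Or.inl (hne u hu))
    have h2 : HasDerivAt (fun u => (u - Tstar) ^ (1 - μ))
        (1 * (1 - μ) * (u - Tstar) ^ (1 - μ - 1)) u :=
      ((hasDerivAt_id u).sub_const Tstar).rpow_const (Or.inl (htpos u hu).ne')
    exact h1.sub (h2.const_mul K)
  have hg'le : ∀ u ∈ Set.Icc s t, g' u ≤ 0 := by
    intro u hu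
    have hYu := hYnn u hu
    have hu0 := htpos u hu
    have hpow : (Y u) ^ μ * (Y u + ε) ^ (-μ) ≤ 1 := by
      have h1 : (Y u) ^ μ ≤ (Y u + ε) ^ μ :=
        Real.rpow_le_rpow hYu (by linarith) hμ0.le
      have h2 : (0:ℝ) < (Y u + ε) ^ μ := Real.rpow_pos_of_pos (by linarith) μ
      have h3 : (Y u + ε) ^ (-μ) = ((Y u + ε) ^ μ)⁻¹ := Real.rpow_neg (by linarith) μ
      rw [h3]
      calc (Y u) ^ μ * ((Y u + ε) ^ μ)⁻¹ ≤ (Y u + ε) ^ μ * ((Y u + ε) ^ μ)⁻¹ :=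
            mul_le_mul_of_nonneg_right h1 (inv_nonneg.2 h2.le)
        _ = 1 := mul_inv_cancel₀ h2.ne'
    have hc : (0:ℝ) < (Y u + ε) ^ (1 - μ - 1) := Real.rpow_pos_of_pos (by linarith) _
    have key : Y' u * (1 - μ) * (Y u + ε) ^ (1 - μ - 1)
        ≤ K * (1 * (1 - μ) * (u - Tstar) ^ (1 - μ - 1)) := by
      have h1 : Y' u * ((1 - μ) * (Y u + ε) ^ (1 - μ - 1))
          ≤ K * (Y u) ^ μ * (u - Tstar) ^ (-μ) * ((1 - μ) * (Y u + ε) ^ (1 - μ - 1)) :=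
        mul_le_mul_of_nonneg_right (hY' u hu) (mul_nonneg (by linarith) hc.le)
      have hexp : (1:ℝ) - μ - 1 = -μ := by ring
      rw [hexp] at h1 ⊢
      calc Y' u * (1 - μ) * (Y u + ε) ^ (-μ)
          = Y' u * ((1 - μ) * (Y u + ε) ^ (-μ)) := by ring
        _ ≤ K * (Y u) ^ μ * (u - Tstar) ^ (-μ) * ((1 - μ) * (Y u + ε) ^ (-μ)) := h1
        _ = (K * (1 - μ) * (u - Tstar) ^ (-μ)) * ((Y u) ^ μ * (Y u + ε) ^ (-μ)) := by ring
        _ ≤ (K * (1 - μ) * (u - Tstar) ^ (-μ)) * 1 := by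
            apply mul_le_mul_of_nonneg_left hpow
            exact mul_nonneg (mul_nonneg hK0.le (by linarith))
              (Real.rpow_nonneg hu0.le (-μ))
        _ = K * (1 * (1 - μ) * (u - Tstar) ^ (-μ)) := by ring
    simp only [g']
    linarith
  have hanti : AntitoneOn g (Set.Icc s t) := by
    apply antitoneOn_of_deriv_nonpos (convex_Icc s t)
    · exact fun u hu => (hgd u hu).continuousAt.continuousWithinAt
    · intro u hu
      rw [interior_Icc] at hu
      exact (hgd u (Set.mem_Icc_of_Ioo hu)).differentiableAt.differentiableWithinAt
    · intro u hu
      rw [interior_Icc] at hu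
      rw [(hgd u (Set.mem_Icc_of_Ioo hu)).deriv]
      exact hg'le u (Set.mem_Icc_of_Ioo hu)
  have hgs : g t ≤ g s :=
    hanti (Set.left_mem_Icc.2 hst.le) (Set.right_mem_Icc.2 hst.le) hst.le
  have htT : (0:ℝ) < t - Tstar := by linarith
  have hgt : (1 - K) * (t - Tstar) ^ (1 - μ)
      ≤ (t - Tstar + ε) ^ (1 - μ) - K * (t - Tstar) ^ (1 - μ) := by
    have h1 : (t - Tstar) ^ (1 - μ) ≤ (t - Tstar + ε) ^ (1 - μ) :=
      Real.rpow_le_rpow htT.le (by linarith) (by linarith)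
    nlinarith [h1]
  simp only [g] at hgs
  rw [hYt] at hgs
  linarith
/-- Backward integration of the differential inequality
`Y' ≤ K·Y^μ·(s'-T*)^{-μ}` with terminal value `Y(t) = t - T*` yields a positive
lower bound on `Y(s)` proportional to `t - T*`. -/
theorem stmt_8 (Tstar s t μ K : ℝ) (hμ0 : 0 < μ) (hμ1 : μ < 1)
    (hK0 : 0 < K) (hK1 : K < 1) (hTs : Tstar < s) (hst : s < t)
    (Y Y' : ℝ → ℝ)
    (hYnn : ∀ u ∈ Set.Icc s t, 0 ≤ Y u)
    (hYd : ∀ u ∈ Set.Icc s t, HasDerivAt Y (Y' u) u)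
    (hY' : ∀ u ∈ Set.Icc s t, Y' u ≤ K * (Y u) ^ μ * (u - Tstar) ^ (-μ))
    (hYt : Y t = t - Tstar) :
    (1 - K) * (t - Tstar) ^ (1 - μ) + K * (s - Tstar) ^ (1 - μ) ≤ (Y s) ^ (1 - μ) ∧
    (1 - K) ^ (1 / (1 - μ)) * (t - Tstar) ≤ Y s := by
  have hYs : 0 ≤ Y s := hYnn s (Set.left_mem_Icc.2 hst.le)
  have h1μ : (0:ℝ) < 1 - μ := by linarith
  have main : (1 - K) * (t - Tstar) ^ (1 - μ) + K * (s - Tstar) ^ (1 - μ) ≤ (Y s) ^ (1 - μ) := by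
    have hlim : Filter.Tendsto (fun ε => (Y s + ε) ^ (1 - μ)) (nhdsWithin 0 (Set.Ioi 0))
        (nhds ((Y s) ^ (1 - μ))) := by
      have h1 : Filter.Tendsto (fun ε : ℝ => Y s + ε) (nhdsWithin 0 (Set.Ioi 0))
          (nhds (Y s)) := by
        have := (continuous_const.add continuous_id (f := fun ε : ℝ => Y s)).tendsto 0
        simpa [Pi.add_def] using this.mono_left nhdsWithin_le_nhds
      exact (Real.continuousAt_rpow_const (Y s) (1 - μ) (Or.inr h1μ.le)).tendsto.comp h1
    refine ge_of_tendsto hlim ?_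
    filter_upwards [self_mem_nhdsWithin] with ε hε
    exact stmt_8_key Tstar s t μ K hμ0 hμ1 hK0 hK1 hTs hst Y Y' hYnn hYd hY' hYt ε hε
  refine ⟨main, ?_⟩
  have hsT : (0:ℝ) < s - Tstar := by linarith
  have htT : (0:ℝ) < t - Tstar := by linarith
  have h2 : (1 - K) * (t - Tstar) ^ (1 - μ) ≤ (Y s) ^ (1 - μ) := by
    have : 0 ≤ K * (s - Tstar) ^ (1 - μ) := by positivity
    linarith
  have h3 : ((1 - K) * (t - Tstar) ^ (1 - μ)) ^ (1 / (1 - μ))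
      ≤ ((Y s) ^ (1 - μ)) ^ (1 / (1 - μ)) :=
    Real.rpow_le_rpow (mul_nonneg (by linarith) (Real.rpow_nonneg htT.le _)) h2
      (one_div_pos.2 h1μ).le
  have hinv : (1 - μ) * (1 / (1 - μ)) = 1 := by field_simp
  have hL : ((1 - K) * (t - Tstar) ^ (1 - μ)) ^ (1 / (1 - μ))
      = (1 - K) ^ (1 / (1 - μ)) * (t - Tstar) := by
    rw [Real.mul_rpow (by linarith) (Real.rpow_nonneg htT.le _)]
    congr 1
    rw [← Real.rpow_mul htT.le, hinv, Real.rpow_one]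
  have hR : ((Y s) ^ (1 - μ)) ^ (1 / (1 - μ)) = Y s := by
    rw [← Real.rpow_mul hYs, hinv, Real.rpow_one]
  rw [hL, hR] at h3
  exact h3
end

section
/- Let J, Σ : D → ℝ be continuous on D = {(x,s) : |x| ≤ X_max, T_in ≤ s ≤ T*} with J(x,s) ≥ c·x² ≥ 0 and 1/(2m) ≤ Σ ≤ 2m. Let Q solve the regularized transport equation (J+δ)∂ₛQ + βΣ∂ₓQ = f₁Q + f₂ with terminal data Q(x,T*) = Q₀(x), characteristics contained in D, and f₁, f₂ ∈ L^∞. If along each characteristic the weight integral I(s) = ∫ₛ^{T*} (J+δ)^{-1}∘Φ ds' satisfies I(s) ≤ C''(T*-s)^{1/3}, then ‖Q‖_∞ ≤ exp(C''·δ*^{1/3}·‖f₁‖_∞)·(‖Q₀‖_∞ + C''·δ*^{1/3}·‖f₂‖_∞), where δ* = T* - T_in. -/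
open Set

set_option maxHeartbeats 1000000 in
/-- Weighted maximum principle for the regularized degenerate transport equation
`(J+δ)∂ₛQ + βSig∂ₓQ = f₁Q + f₂`: along the characteristic flow `Φ`, if the weight
integral `∫ₛ^{T*} (J+δ)⁻¹∘Φ` is bounded by `C''(T*-s)^{1/3}`, then `Q` obeys the
Grönwall bound
`‖Q‖_∞ ≤ exp(C''·δ*^{1/3}·‖f₁‖_∞)·(‖Q₀‖_∞ + C''·δ*^{1/3}·‖f₂‖_∞)`. -/
theorem stmt_17 (Xmax Tin Tstar δ β c m C'' N₀ N₁ N₂ : ℝ)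
    (hX : 0 < Xmax) (hT : Tin < Tstar) (hδ : 0 < δ) (hβ : 0 < β)
    (hc : 0 < c) (hm : 0 < m) (hC : 0 < C'')
    (hN₀ : 0 ≤ N₀) (hN₁ : 0 ≤ N₁) (hN₂ : 0 ≤ N₂)
    (J Sig Q f₁ f₂ : ℝ → ℝ → ℝ) (Q₀ : ℝ → ℝ) (Φ : ℝ → ℝ → ℝ)
    (D : Set (ℝ × ℝ))
    (hD : D = {p : ℝ × ℝ | |p.1| ≤ Xmax ∧ Tin ≤ p.2 ∧ p.2 ≤ Tstar})
    -- continuity and bounds for the coefficients on D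
    (hJcont : ContinuousOn (fun p : ℝ × ℝ => J p.1 p.2) D)
    (hSigcont : ContinuousOn (fun p : ℝ × ℝ => Sig p.1 p.2) D)
    (hJ : ∀ x s, (x, s) ∈ D → c * x ^ 2 ≤ J x s)
    (hSiglo : ∀ x s, (x, s) ∈ D → 1 / (2 * m) ≤ Sig x s)
    (hSighi : ∀ x s, (x, s) ∈ D → Sig x s ≤ 2 * m)
    -- the characteristics of the regularized field, contained in D
    (hΦT : ∀ X, |X| ≤ Xmax → Φ X Tstar = X)
    (hΦD : ∀ X s, |X| ≤ Xmax → Tin ≤ s → s ≤ Tstar → (Φ X s, s) ∈ D)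
    (hΦode : ∀ X s, |X| ≤ Xmax → Tin ≤ s → s ≤ Tstar →
      HasDerivAt (fun u => Φ X u)
        (β * Sig (Φ X s) s / (J (Φ X s) s + δ)) s)
    (hΦsurj : ∀ x s, (x, s) ∈ D → ∃ X, |X| ≤ Xmax ∧ Φ X s = x)
    -- Q solves the transport equation along characteristics, with terminal data Q₀
    (hQode : ∀ X s, |X| ≤ Xmax → Tin ≤ s → s ≤ Tstar →
      HasDerivAt (fun u => Q (Φ X u) u)
        ((f₁ (Φ X s) s * Q (Φ X s) s + f₂ (Φ X s) s) / (J (Φ X s) s + δ)) s)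
    (hQ0 : ∀ x, |x| ≤ Xmax → Q x Tstar = Q₀ x)
    -- the weight integral bound along each characteristic
    (hWeight : ∀ X s, |X| ≤ Xmax → Tin ≤ s → s ≤ Tstar →
      (∫ s' in s..Tstar, (J (Φ X s') s' + δ)⁻¹) ≤ C'' * (Tstar - s) ^ ((1:ℝ)/3))
    -- sup-norm bounds on the data
    (hf₁ : ∀ x s, (x, s) ∈ D → |f₁ x s| ≤ N₁)
    (hf₂ : ∀ x s, (x, s) ∈ D → |f₂ x s| ≤ N₂)
    (hq0 : ∀ x, |x| ≤ Xmax → |Q₀ x| ≤ N₀) :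
    ∀ x s, (x, s) ∈ D →
      |Q x s| ≤ Real.exp (C'' * (Tstar - Tin) ^ ((1:ℝ)/3) * N₁)
        * (N₀ + C'' * (Tstar - Tin) ^ ((1:ℝ)/3) * N₂) := by
  intro x s hmem
  rw [hD] at hmem
  obtain ⟨hx1, hs1, hs2⟩ := hmem
  obtain ⟨X, hXb, hΦx⟩ := hΦsurj x s (by rw [hD]; exact ⟨hx1, hs1, hs2⟩)
  have hTT : Tin ≤ Tstar := le_of_lt hT
  set proj : ℝ → ℝ := fun u => min (max u Tin) Tstar with hprojdef
  have hprojmem : ∀ u, Tin ≤ proj u ∧ proj u ≤ Tstar := fun u =>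
    ⟨le_min (le_max_right u Tin) hTT, min_le_right _ _⟩
  have hprojeq : ∀ u, Tin ≤ u → u ≤ Tstar → proj u = u := fun u h1 h2 => by
    simp [hprojdef, max_eq_left h1, min_eq_left h2]
  have hprojcont : Continuous proj := (continuous_id.max continuous_const).min continuous_const
  set w : ℝ → ℝ := fun u => (J (Φ X (proj u)) (proj u) + δ)⁻¹ with hwdef
  have hmemD : ∀ u, (Φ X (proj u), proj u) ∈ D := fun u =>
    hΦD X (proj u) hXb (hprojmem u).1 (hprojmem u).2
  have hpos : ∀ u, 0 < J (Φ X (proj u)) (proj u) + δ := fun u => by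
    have := hJ _ _ (hmemD u)
    nlinarith [sq_nonneg (Φ X (proj u))]
  have hΦcont : ContinuousOn (fun u => Φ X u) (Icc Tin Tstar) := fun u hu =>
    (hΦode X u hXb hu.1 hu.2).continuousAt.continuousWithinAt
  have hmapcont : Continuous (fun u => ((Φ X (proj u), proj u) : ℝ × ℝ)) := by
    refine Continuous.prodMk ?_ hprojcont
    exact hΦcont.comp_continuous hprojcont (fun u => ⟨(hprojmem u).1, (hprojmem u).2⟩)
  have hJwcont : Continuous (fun u => J (Φ X (proj u)) (proj u)) :=
    hJcont.comp_continuous hmapcont (fun u => hmemD u)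
  have hwcont : Continuous w := (hJwcont.add continuous_const).inv₀ (fun u => (hpos u).ne')
  have hwpos : ∀ u, 0 < w u := fun u => inv_pos.mpr (hpos u)
  set P : ℝ → ℝ := fun u => ∫ v in Tstar..u, w v with hPdef
  have hPderiv : ∀ u, HasDerivAt P (w u) u := fun u =>
    intervalIntegral.integral_hasDerivAt_right (hwcont.intervalIntegrable _ _)
      (hwcont.stronglyMeasurableAtFilter _ _) hwcont.continuousAt
  set I : ℝ → ℝ := fun t => -P (Tstar - t) with hIdef
  have hlin : ∀ t : ℝ, HasDerivAt (fun t : ℝ => Tstar - t) (-1) t := fun t => by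
    simpa using (hasDerivAt_id t).const_sub Tstar
  have hIderiv : ∀ t, HasDerivAt I (w (Tstar - t)) t := fun t => by
    have h2 := (((hPderiv (Tstar - t)).comp t (hlin t)).neg)
    refine h2.congr_deriv ?_
    ring
  have hIint : ∀ t, I t = ∫ v in (Tstar - t)..Tstar, w v := fun t => by
    simp only [hIdef, hPdef]
    rw [intervalIntegral.integral_symm Tstar (Tstar - t)]
  have hInonneg : ∀ t, 0 ≤ t → 0 ≤ I t := fun t ht => by
    rw [hIint]
    exact intervalIntegral.integral_nonneg (by linarith) (fun u _ => (hwpos u).le)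
  set K := I (Tstar - s) with hKdef
  have hK0 : 0 ≤ K := hInonneg _ (by linarith)
  have hGval : Q (Φ X (Tstar - (Tstar - s))) (Tstar - (Tstar - s)) = Q x s := by
    rw [sub_sub_cancel, hΦx]
  have main : ∀ ε : ℝ, 0 < ε →
      |Q x s| ≤ Real.exp (N₁ * K) * (N₀ + N₂ * K) + ε * Real.exp ((N₁ + 1) * K) := by
    intro ε hε
    set B : ℝ → ℝ := fun t => Real.exp (N₁ * I t) * (N₀ + N₂ * I t)
      + ε * Real.exp ((N₁ + 1) * I t) with hBdef
    set B' : ℝ → ℝ := fun t => w (Tstar - t) *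
      (N₁ * (Real.exp (N₁ * I t) * (N₀ + N₂ * I t)) + N₂ * Real.exp (N₁ * I t)
        + ε * ((N₁ + 1) * Real.exp ((N₁ + 1) * I t))) with hB'def
    have hBderiv : ∀ t, HasDerivAt B (B' t) t := fun t => by
      have hI := hIderiv t
      have h1 : HasDerivAt (fun t => Real.exp (N₁ * I t))
          (Real.exp (N₁ * I t) * (N₁ * w (Tstar - t))) t := (hI.const_mul N₁).exp
      have h2 : HasDerivAt (fun t => N₀ + N₂ * I t) (N₂ * w (Tstar - t)) t :=
        (hI.const_mul N₂).const_add N₀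
      have h3 : HasDerivAt (fun t => Real.exp ((N₁ + 1) * I t))
          (Real.exp ((N₁ + 1) * I t) * ((N₁ + 1) * w (Tstar - t))) t :=
        (hI.const_mul (N₁ + 1)).exp
      have h4 := (h1.mul h2).add (h3.const_mul ε)
      refine h4.congr_deriv ?_
      simp only [hB'def]
      ring
    set G : ℝ → ℝ := fun t => Q (Φ X (Tstar - t)) (Tstar - t) with hGdef
    set G' : ℝ → ℝ := fun t =>
      -((f₁ (Φ X (Tstar - t)) (Tstar - t) * Q (Φ X (Tstar - t)) (Tstar - t)
          + f₂ (Φ X (Tstar - t)) (Tstar - t)) / (J (Φ X (Tstar - t)) (Tstar - t) + δ))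
      with hG'def
    have hGderiv : ∀ t ∈ Icc (0:ℝ) (Tstar - s), HasDerivAt G (G' t) t := fun t ht => by
      have hu1 : Tin ≤ Tstar - t := by
        have := ht.2; linarith
      have hu2 : Tstar - t ≤ Tstar := by
        have := ht.1; linarith
      have hq := hQode X (Tstar - t) hXb hu1 hu2
      have h5 := hq.comp t (hlin t)
      have h6 : G = (fun u => Q (Φ X u) u) ∘ (fun t : ℝ => Tstar - t) := rfl
      rw [h6]
      refine h5.congr_deriv ?_
      simp only [hG'def]
      ring
    have hGcont : ContinuousOn G (Icc 0 (Tstar - s)) := fun t ht =>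
      (hGderiv t ht).continuousAt.continuousWithinAt
    have hI0 : I 0 = 0 := by simp [hIdef, hPdef]
    have ha : ‖G 0‖ ≤ B 0 := by
      have hG0 : G 0 = Q₀ X := by
        simp only [hGdef, sub_zero, hΦT X hXb]
        exact hQ0 X hXb
      rw [Real.norm_eq_abs, hG0, hBdef]
      simp only [hI0, mul_zero, Real.exp_zero, one_mul, mul_one]
      have := hq0 X hXb
      linarith
    have bound : ∀ t ∈ Ico (0:ℝ) (Tstar - s), ‖G t‖ = B t → ‖G' t‖ < B' t := by
      intro t ht heq
      have hu1 : Tin ≤ Tstar - t := by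
        have := ht.2; linarith
      have hu2 : Tstar - t ≤ Tstar := by
        have := ht.1; linarith
      have hmemD' : (Φ X (Tstar - t), Tstar - t) ∈ D := hΦD X (Tstar - t) hXb hu1 hu2
      have hwu : w (Tstar - t) = (J (Φ X (Tstar - t)) (Tstar - t) + δ)⁻¹ := by
        simp only [hwdef, hprojeq (Tstar - t) hu1 hu2]
      have hJpos : 0 < J (Φ X (Tstar - t)) (Tstar - t) + δ := by
        have := hJ _ _ hmemD'
        nlinarith [sq_nonneg (Φ X (Tstar - t))]
      have hf1 := hf₁ _ _ hmemD'
      have hf2 := hf₂ _ _ hmemD'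
      have hQB : |Q (Φ X (Tstar - t)) (Tstar - t)| = B t := by
        rw [← heq, Real.norm_eq_abs]
      have hnum : |f₁ (Φ X (Tstar - t)) (Tstar - t) * Q (Φ X (Tstar - t)) (Tstar - t)
          + f₂ (Φ X (Tstar - t)) (Tstar - t)| ≤ N₁ * B t + N₂ := by
        refine (abs_add_le _ _).trans ?_
        rw [abs_mul]
        have h7 : |f₁ (Φ X (Tstar - t)) (Tstar - t)| * |Q (Φ X (Tstar - t)) (Tstar - t)|
            ≤ N₁ * B t := by
          rw [hQB]
          have hB0 : 0 ≤ B t := by rw [← hQB]; exact abs_nonneg _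
          exact mul_le_mul_of_nonneg_right hf1 hB0
        linarith
      have hG'eq : ‖G' t‖ = |f₁ (Φ X (Tstar - t)) (Tstar - t) * Q (Φ X (Tstar - t)) (Tstar - t)
          + f₂ (Φ X (Tstar - t)) (Tstar - t)| * (J (Φ X (Tstar - t)) (Tstar - t) + δ)⁻¹ := by
        rw [Real.norm_eq_abs, hG'def]
        rw [abs_neg, abs_div, abs_of_pos hJpos, div_eq_mul_inv]
      have hstep : ‖G' t‖ ≤ (N₁ * B t + N₂) * w (Tstar - t) := by
        rw [hG'eq, hwu]
        exact mul_le_mul_of_nonneg_right hnum (inv_pos.mpr hJpos).le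
      refine hstep.trans_lt ?_
      have hwp : 0 < w (Tstar - t) := hwpos _
      have hIt : 0 ≤ I t := hInonneg t ht.1
      have hE1 : (1:ℝ) ≤ Real.exp (N₁ * I t) := Real.one_le_exp (by positivity)
      have hE2 : 0 < Real.exp ((N₁ + 1) * I t) := Real.exp_pos _
      rw [hBdef, hB'def]
      have key : N₁ * (Real.exp (N₁ * I t) * (N₀ + N₂ * I t)
            + ε * Real.exp ((N₁ + 1) * I t)) + N₂
          < N₁ * (Real.exp (N₁ * I t) * (N₀ + N₂ * I t)) + N₂ * Real.exp (N₁ * I t)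
            + ε * ((N₁ + 1) * Real.exp ((N₁ + 1) * I t)) := by
        nlinarith [mul_pos hε hE2, mul_le_mul_of_nonneg_left hE1 hN₂]
      calc (N₁ * B t + N₂) * w (Tstar - t)
          = w (Tstar - t) * (N₁ * B t + N₂) := by ring
        _ < _ := by exact mul_lt_mul_of_pos_left key hwp
    have hfinal := image_norm_le_of_norm_deriv_right_lt_deriv_boundary hGcont
      (fun t ht => (hGderiv t (Ico_subset_Icc_self ht)).hasDerivWithinAt) ha
      hBderiv bound (right_mem_Icc.mpr (by linarith))
    rw [Real.norm_eq_abs] at hfinal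
    simp only [hGdef] at hfinal
    rw [hGval] at hfinal
    exact hfinal
  have hQb : |Q x s| ≤ Real.exp (N₁ * K) * (N₀ + N₂ * K) := by
    refine le_of_forall_pos_le_add (fun ε hε => ?_)
    have h8 := main (ε / Real.exp ((N₁ + 1) * K)) (div_pos hε (Real.exp_pos _))
    rwa [div_mul_cancel₀ _ (Real.exp_pos _).ne'] at h8
  have hKA : K ≤ C'' * (Tstar - Tin) ^ ((1:ℝ)/3) := by
    have h1 : K = ∫ s' in s..Tstar, (J (Φ X s') s' + δ)⁻¹ := by
      rw [hKdef, hIint, sub_sub_cancel]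
      refine intervalIntegral.integral_congr (fun u hu => ?_)
      rw [uIcc_of_le hs2] at hu
      simp only [hwdef, hprojeq u (le_trans hs1 hu.1) hu.2]
    rw [h1]
    refine (hWeight X s hXb hs1 hs2).trans ?_
    refine mul_le_mul_of_nonneg_left ?_ hC.le
    exact Real.rpow_le_rpow (by linarith) (by linarith) (by norm_num)
  have hA0 : 0 ≤ C'' * (Tstar - Tin) ^ ((1:ℝ)/3) := le_trans hK0 hKA
  refine hQb.trans ?_
  apply mul_le_mul
  · exact Real.exp_le_exp.mpr (by nlinarith)
  · nlinarith
  · positivity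
  · exact (Real.exp_pos _).le
end
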